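/- arXiv:2205.00527 — 2 statements merged into one kernel-verified Lean document; each statement's English description precedes it below -/
import Mathlib

section
/- For every nonnegative integer n, the signed count ∑_π (−1)^{E(π)}, taken over all partitions π into distinct parts with O(π) = n (a finite set), equals the number of partitions of n into distinct odd parts. -/
/-- Sum of `f` over the entries of a list at even 0-based positions, i.e. over the
odd-indexed parts `λ1, λ3, λ5, …` of a partition `(λ1, λ2, λ3, …)`. -/
def sumAlt (f : ℕ → ℕ) : List ℕ → ℕ
  | [] => 0
  | [a] => f a
  | a :: _ :: l => f a + sumAlt f l

/-- `O(π) = λ1 + λ3 + λ5 + ⋯`, the sum of the odd-indexed parts. -/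
def Osum (l : List ℕ) : ℕ := sumAlt id l

/-- `E(π) = λ2 + λ4 + λ6 + ⋯`, the sum of the even-indexed parts. -/
def Esum (l : List ℕ) : ℕ := sumAlt id l.tail

/-- `γ(π) = λ1 − λ2 + λ3 − λ4 + ⋯ = O(π) − E(π)`, the alternating sum of the parts.
For a weakly decreasing list we have `Osum l ≥ Esum l`, so natural subtraction is exact. -/
def gammaSum (l : List ℕ) : ℕ := Osum l - Esum l

/-- `⌈O⌉(π) = ∑ ⌈λ_{2i−1}/2⌉`. -/
def ceilO (l : List ℕ) : ℕ := sumAlt (fun a => (a + 1) / 2) l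

/-- `⌊O⌋(π) = ∑ ⌊λ_{2i−1}/2⌋`. -/
def floorO (l : List ℕ) : ℕ := sumAlt (fun a => a / 2) l

/-- `⌈E⌉(π) = ∑ ⌈λ_{2i}/2⌉`. -/
def ceilE (l : List ℕ) : ℕ := sumAlt (fun a => (a + 1) / 2) l.tail

/-- `⌊E⌋(π) = ∑ ⌊λ_{2i}/2⌋`. -/
def floorE (l : List ℕ) : ℕ := sumAlt (fun a => a / 2) l.tail

/-- A partition: a weakly decreasing finite list of positive integers. -/
def IsPartition (l : List ℕ) : Prop := l.Pairwise (· ≥ ·) ∧ ∀ x ∈ l, 0 < x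

/-- A partition into distinct parts: a strictly decreasing finite list of positive integers. -/
def IsDistinctPartition (l : List ℕ) : Prop := l.Pairwise (· > ·) ∧ ∀ x ∈ l, 0 < x

/-- The Gaussian binomial coefficient `[n choose k]_q` as a polynomial in `q`
(defined by the q-Pascal recurrence; it equals `(q;q)_n / ((q;q)_k (q;q)_{n−k})`). -/
noncomputable def qbinom : ℕ → ℕ → Polynomial ℤ
  | _, 0 => 1
  | 0, _ + 1 => 0
  | n + 1, k + 1 => qbinom n k + Polynomial.X ^ (k + 1) * qbinom n (k + 1)


/-! Read a partition as the pairs `(λ1, λ2), (λ3, λ4), …`, a missing last even-indexed part being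
`0`. Once the odd-indexed parts are fixed, in a pair `(a, b)` followed by the odd-indexed part `c`
(or by `-1` at the end) the part `b` ranges over the interval `(c, a)`. Pairing
`c + 1 ↔ c + 2`, `c + 3 ↔ c + 4`, … matches up this interval except for `b = a - 1` when
`a ≡ c (mod 2)`; it changes `E(π)` by one and leaves `O(π)` alone. Doing this to the first pair
that admits it is a sign-reversing involution whose fixed points are the partitions
`(a₁, a₁ - 1, a₂, a₂ - 1, …)` with all `aᵢ` odd, i.e. the partitions of `O(π)` into distinct odd
parts `a₁ > a₂ > ⋯`. -/

theorem neg_one_pow_add_neg_one_pow_of_odd {m n : ℕ} (h : Odd (m + n)) :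
    (-1 : ℤ) ^ m + (-1) ^ n = 0 := by
  have h' := h.neg_one_pow (α := ℤ)
  rw [pow_add] at h'
  rcases neg_one_pow_eq_or ℤ m with hm | hm <;> rw [hm] at h' ⊢ <;> linarith

theorem finsum_mem_neg_one_pow_eq_ncard {α : Type*} {s : Set α} (hs : s.Finite) {σ : α → α}
    {e : α → ℕ} (hσs : Set.MapsTo σ s s) (hσσ : ∀ x ∈ s, σ (σ x) = x)
    (hodd : ∀ x ∈ s, σ x ≠ x → Odd (e (σ x) + e x)) (heven : ∀ x ∈ s, σ x = x → Even (e x)) :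
    ∑ᶠ x ∈ s, (-1 : ℤ) ^ e x = {x ∈ s | σ x = x}.ncard := by
  classical
  rw [finsum_mem_eq_finite_toFinset_sum _ hs,
    ← Finset.sum_filter_add_sum_filter_not _ (fun x => σ x = x)]
  have hfixed : ∑ x ∈ hs.toFinset with σ x = x, (-1 : ℤ) ^ e x = {x ∈ s | σ x = x}.ncard := by
    calc ∑ x ∈ hs.toFinset with σ x = x, (-1 : ℤ) ^ e x
        = ∑ x ∈ hs.toFinset with σ x = x, 1 := Finset.sum_congr rfl fun x hx => by
          obtain ⟨hxs, hfix⟩ := Finset.mem_filter.1 hx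
          exact (heven x (hs.mem_toFinset.1 hxs) hfix).neg_one_pow
      _ = _ := by
          rw [Finset.sum_const, nsmul_one, ← Set.ncard_coe_finset]
          congr
          ext
          simp
  have hfree : ∑ x ∈ hs.toFinset with σ x ≠ x, (-1 : ℤ) ^ e x = 0 := by
    refine Finset.sum_involution (fun x _ => σ x) (fun x hx => ?_) (fun x hx _ => ?_)
      (fun x hx => ?_) (fun x hx => ?_) <;>
      obtain ⟨hxs, hx⟩ := by simpa only [Finset.mem_filter, Set.Finite.mem_toFinset] using hx
    · rw [add_comm]
      exact neg_one_pow_add_neg_one_pow_of_odd (hodd x hxs hx)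
    · exact hx
    · simpa [hσσ x hxs] using ⟨hσs hxs, Ne.symm hx⟩
    · exact hσσ x hxs
  rw [hfixed, hfree, add_zero]

theorem osum_cons (a : ℕ) (l : List ℕ) : Osum (a :: l) = a + Esum l := by
  cases l <;> rfl

theorem esum_cons (a : ℕ) (l : List ℕ) : Esum (a :: l) = Osum l := rfl

theorem osum_cons_cons (a b : ℕ) (l : List ℕ) : Osum (a :: b :: l) = a + Osum l := rfl

theorem esum_cons_cons (a b : ℕ) (l : List ℕ) : Esum (a :: b :: l) = b + Esum l := by
  rw [esum_cons, osum_cons]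

theorem isDistinctPartition_nil : IsDistinctPartition [] := ⟨.nil, by simp⟩

theorem isDistinctPartition_singleton {a : ℕ} : IsDistinctPartition [a] ↔ 0 < a := by
  simp [IsDistinctPartition]

theorem isDistinctPartition_cons_cons {a b : ℕ} {l : List ℕ} :
    IsDistinctPartition (a :: b :: l) ↔ b < a ∧ IsDistinctPartition (b :: l) := by
  simp only [IsDistinctPartition, ← List.isChain_iff_pairwise, List.isChain_cons_cons,
    List.forall_mem_cons]
  exact ⟨fun ⟨⟨hba, hc⟩, _, hb, hl⟩ => ⟨hba, hc, hb, hl⟩,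
    fun ⟨hba, hc, hb, hl⟩ => ⟨⟨hba, hc⟩, by omega, hb, hl⟩⟩

theorem le_osum_of_mem {l : List ℕ} (hl : IsDistinctPartition l) {x : ℕ} (hx : x ∈ l) :
    x ≤ Osum l := by
  cases l with
  | nil => simp at hx
  | cons a t =>
    have hxa : x ≤ a := by
      rcases List.mem_cons.1 hx with rfl | hx
      · rfl
      · exact (List.rel_of_pairwise_cons hl.1 hx).le
    rw [osum_cons]
    omega

theorem finite_setOf_osum_eq (n : ℕ) :
    {l : List ℕ | IsDistinctPartition l ∧ Osum l = n}.Finite := by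
  refine ((Finset.range (n + 1)).powerset.finite_toSet.image (·.sort (· ≥ ·))).subset ?_
  rintro l ⟨hl, rfl⟩
  refine ⟨l.toFinset, ?_, (List.toFinset_sort _ hl.1.nodup).2 (hl.1.imp le_of_lt)⟩
  rw [Finset.mem_coe, Finset.mem_powerset]
  intro x hx
  simpa [Nat.lt_succ_iff] using le_osum_of_mem hl (List.mem_toFinset.1 hx)

/-- The pair `(a, b)` closing a partition, `b = 0` standing for a missing part. -/
def lastPair (a b : ℕ) : List ℕ := if b = 0 then [a] else [a, b]

theorem lastPair_eq_cons (a b : ℕ) : ∃ t, lastPair a b = a :: t := by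
  unfold lastPair
  split_ifs <;> exact ⟨_, rfl⟩

theorem isDistinctPartition_lastPair {a b : ℕ} : IsDistinctPartition (lastPair a b) ↔ b < a := by
  unfold lastPair
  split_ifs with hb
  · rw [isDistinctPartition_singleton, hb]
  · rw [isDistinctPartition_cons_cons, isDistinctPartition_singleton]
    omega

theorem osum_lastPair (a b : ℕ) : Osum (lastPair a b) = a := by
  unfold lastPair
  split_ifs <;> rfl

theorem esum_lastPair (a b : ℕ) : Esum (lastPair a b) = b := by
  unfold lastPair
  split_ifs with hb
  · exact hb.symm
  · rfl

theorem IsDistinctPartition.pairInduction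
    {motive : (l : List ℕ) → IsDistinctPartition l → Prop}
    (nil : motive [] isDistinctPartition_nil)
    (pair : ∀ a b (hba : b < a), motive (lastPair a b) (isDistinctPartition_lastPair.2 hba))
    (cons : ∀ a b c l (hcb : c < b) (hba : b < a) (hcl : IsDistinctPartition (c :: l)),
      motive (c :: l) hcl →
        motive (a :: b :: c :: l)
          (isDistinctPartition_cons_cons.2 ⟨hba, isDistinctPartition_cons_cons.2 ⟨hcb, hcl⟩⟩)) :
    ∀ (l : List ℕ) (hl : IsDistinctPartition l), motive l hl
  | [], _ => nil
  | [a], hl => pair a 0 (isDistinctPartition_singleton.1 hl)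
  | [a, b], hl => by
    obtain ⟨hba, hb⟩ := isDistinctPartition_cons_cons.1 hl
    have key : ∀ l' (e : lastPair a b = l') (hl' : IsDistinctPartition l'), motive l' hl' := by
      rintro _ rfl _
      exact pair a b hba
    exact key _ (if_neg (isDistinctPartition_singleton.1 hb).ne') hl
  | a :: b :: c :: l, hl => by
    obtain ⟨hba, hbl⟩ := isDistinctPartition_cons_cons.1 hl
    obtain ⟨hcb, hcl⟩ := isDistinctPartition_cons_cons.1 hbl
    exact cons a b c l hcb hba hcl (pairInduction nil pair cons _ hcl)

def toggle (c b : ℕ) : ℕ := if b % 2 = c % 2 then b - 1 else b + 1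

theorem toggle_toggle (c b : ℕ) : toggle c (toggle c b) = b := by
  unfold toggle
  split_ifs <;> omega

theorem toggle_bounds {c lo a b : ℕ} (hlo : lo % 2 ≠ c % 2) (hb : lo ≤ b) (hba : b < a)
    (hfix : ¬(b + 1 = a ∧ a % 2 = c % 2)) : lo ≤ toggle c b ∧ toggle c b < a := by
  unfold toggle
  split_ifs <;> omega

theorem not_fixed_toggle {c a b : ℕ} (hba : b < a) : ¬(toggle c b + 1 = a ∧ a % 2 = c % 2) := by
  unfold toggle
  split_ifs <;> omega

theorem odd_toggle_add {c lo b : ℕ} (hlo : lo % 2 ≠ c % 2) (hb : lo ≤ b) :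
    Odd (toggle c b + b) := by
  rw [Nat.odd_iff]
  unfold toggle
  split_ifs <;> omega

theorem toggle_ne_self {c lo b : ℕ} (hlo : lo % 2 ≠ c % 2) (hb : lo ≤ b) : toggle c b ≠ b := by
  unfold toggle
  split_ifs <;> omega

/-- At the end of the list the next odd-indexed part is read as `-1`, hence the parity `1`. -/
def signInvolution : List ℕ → List ℕ
  | [] => []
  | [a] => if 0 + 1 = a ∧ a % 2 = 1 then lastPair a 0 else lastPair a (toggle 1 0)
  | [a, b] => if b + 1 = a ∧ a % 2 = 1 then lastPair a b else lastPair a (toggle 1 b)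
  | a :: b :: c :: l =>
    if b + 1 = a ∧ a % 2 = c % 2 then a :: b :: signInvolution (c :: l)
    else a :: toggle c b :: c :: l

theorem signInvolution_lastPair (a b : ℕ) :
    signInvolution (lastPair a b) =
      if b + 1 = a ∧ a % 2 = 1 then lastPair a b else lastPair a (toggle 1 b) := by
  rcases Nat.eq_zero_or_pos b with rfl | hb
  · rfl
  · have h : lastPair a b = [a, b] := if_neg hb.ne'
    calc signInvolution (lastPair a b) = signInvolution [a, b] := by rw [h]
      _ = _ := rfl

theorem signInvolution_cons_cons_cons (a b c : ℕ) (l : List ℕ) :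
    signInvolution (a :: b :: c :: l) =
      if b + 1 = a ∧ a % 2 = c % 2 then a :: b :: signInvolution (c :: l)
      else a :: toggle c b :: c :: l := rfl

theorem signInvolution_cons (a : ℕ) (l : List ℕ) : ∃ t, signInvolution (a :: l) = a :: t := by
  match l with
  | [] | [_] => unfold signInvolution; split_ifs <;> exact lastPair_eq_cons _ _
  | b :: c :: t => rw [signInvolution_cons_cons_cons]; split_ifs <;> exact ⟨_, rfl⟩

theorem isDistinctPartition_signInvolution {l : List ℕ} (hl : IsDistinctPartition l) :
    IsDistinctPartition (signInvolution l) := by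
  induction l, hl using IsDistinctPartition.pairInduction with
  | nil => exact isDistinctPartition_nil
  | pair a b hba =>
    rw [signInvolution_lastPair]
    split_ifs with hfix
    · exact isDistinctPartition_lastPair.2 hba
    · exact isDistinctPartition_lastPair.2 (toggle_bounds (lo := 0) (by omega) b.zero_le hba hfix).2
  | cons a b c l hcb hba hcl ih =>
    rw [signInvolution_cons_cons_cons]
    split_ifs with hfix
    · obtain ⟨t, ht⟩ := signInvolution_cons c l
      rw [ht] at ih ⊢
      exact isDistinctPartition_cons_cons.2 ⟨hba, isDistinctPartition_cons_cons.2 ⟨hcb, ih⟩⟩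
    · obtain ⟨hc, hb⟩ := toggle_bounds (lo := c + 1) (by omega) hcb hba hfix
      exact isDistinctPartition_cons_cons.2 ⟨hb, isDistinctPartition_cons_cons.2 ⟨hc, hcl⟩⟩

theorem osum_signInvolution {l : List ℕ} (hl : IsDistinctPartition l) :
    Osum (signInvolution l) = Osum l := by
  induction l, hl using IsDistinctPartition.pairInduction with
  | nil => rfl
  | pair a b _ =>
    rw [signInvolution_lastPair]
    split_ifs <;> simp only [osum_lastPair]
  | cons a b c l _ _ _ ih =>
    rw [signInvolution_cons_cons_cons]
    split_ifs
    · rw [osum_cons_cons, ih, osum_cons_cons]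
    · rfl

theorem signInvolution_signInvolution {l : List ℕ} (hl : IsDistinctPartition l) :
    signInvolution (signInvolution l) = l := by
  induction l, hl using IsDistinctPartition.pairInduction with
  | nil => rfl
  | pair a b hba =>
    rw [signInvolution_lastPair]
    split_ifs with hfix
    · rw [signInvolution_lastPair, if_pos hfix]
    · rw [signInvolution_lastPair, if_neg (not_fixed_toggle hba), toggle_toggle]
  | cons a b c l _ hba _ ih =>
    rw [signInvolution_cons_cons_cons]
    split_ifs with hfix
    · obtain ⟨t, ht⟩ := signInvolution_cons c l
      rw [ht, signInvolution_cons_cons_cons, if_pos hfix, ← ht, ih]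
    · rw [signInvolution_cons_cons_cons, if_neg (not_fixed_toggle hba), toggle_toggle]

theorem odd_esum_signInvolution_add {l : List ℕ} (hl : IsDistinctPartition l)
    (hne : signInvolution l ≠ l) : Odd (Esum (signInvolution l) + Esum l) := by
  induction l, hl using IsDistinctPartition.pairInduction with
  | nil => exact absurd rfl hne
  | pair a b _ =>
    rw [signInvolution_lastPair] at hne ⊢
    split_ifs at hne ⊢
    · exact absurd rfl hne
    · rw [esum_lastPair, esum_lastPair]
      exact odd_toggle_add (lo := 0) (by omega) b.zero_le
  | cons a b c l hcb _ _ ih =>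
    rw [signInvolution_cons_cons_cons] at hne ⊢
    split_ifs at hne ⊢
    · rw [esum_cons_cons, esum_cons_cons, add_add_add_comm, ← two_mul]
      exact (even_two_mul b).add_odd (ih fun h => hne (by rw [h]))
    · rw [esum_cons_cons, esum_cons_cons, add_add_add_comm, ← two_mul]
      exact (odd_toggle_add (c := c) (lo := c + 1) (by omega) hcb).add_even (even_two_mul _)

def spread : List ℕ → List ℕ
  | [] => []
  | [a] => lastPair a (a - 1)
  | a :: b :: l => a :: (a - 1) :: spread (b :: l)

def oddIndexed : List ℕ → List ℕ
  | [] => []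
  | [a] => [a]
  | a :: _ :: l => a :: oddIndexed l

theorem oddIndexed_spread (m : List ℕ) : oddIndexed (spread m) = m := by
  induction m using spread.induct with
  | case1 => rfl
  | case2 a =>
    show oddIndexed (lastPair a (a - 1)) = [a]
    unfold lastPair
    split_ifs <;> rfl
  | case3 a b l ih => exact congrArg (a :: ·) ih

theorem spread_injective : Function.Injective spread :=
  Function.LeftInverse.injective oddIndexed_spread

theorem spread_cons (a : ℕ) (l : List ℕ) : ∃ t, spread (a :: l) = a :: t := by
  cases l with
  | nil => exact lastPair_eq_cons a (a - 1)
  | cons b l => exact ⟨_, rfl⟩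

theorem osum_spread (m : List ℕ) : Osum (spread m) = m.sum := by
  induction m using spread.induct with
  | case1 => rfl
  | case2 a => exact osum_lastPair a (a - 1)
  | case3 a b l ih =>
    rw [spread, osum_cons_cons, ih]
    rfl

theorem even_esum_spread {m : List ℕ} (hodd : ∀ x ∈ m, Odd x) : Even (Esum (spread m)) := by
  induction m using spread.induct with
  | case1 => exact ⟨0, rfl⟩
  | case2 a =>
    rw [spread, esum_lastPair, ← Nat.not_odd_iff_even, Nat.odd_iff]
    have := Nat.odd_iff.1 (hodd a (List.mem_singleton_self a))
    omega
  | case3 a b l ih =>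
    rw [spread, esum_cons_cons]
    refine Even.add ?_ (ih fun x hx => hodd x (List.mem_cons_of_mem a hx))
    rw [← Nat.not_odd_iff_even, Nat.odd_iff]
    have := Nat.odd_iff.1 (hodd a List.mem_cons_self)
    omega

theorem isDistinctPartition_spread {m : List ℕ} (hm : IsDistinctPartition m)
    (hodd : ∀ x ∈ m, Odd x) : IsDistinctPartition (spread m) := by
  induction m using spread.induct with
  | case1 => exact isDistinctPartition_nil
  | case2 a =>
    have := isDistinctPartition_singleton.1 hm
    exact isDistinctPartition_lastPair.2 (by omega)
  | case3 a b l ih =>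
    obtain ⟨hba, hbl⟩ := isDistinctPartition_cons_cons.1 hm
    have ha := Nat.odd_iff.1 (hodd a List.mem_cons_self)
    have hb := Nat.odd_iff.1 (hodd b (List.mem_cons_of_mem a List.mem_cons_self))
    obtain ⟨t, ht⟩ := spread_cons b l
    have ih := ih hbl fun x hx => hodd x (List.mem_cons_of_mem a hx)
    rw [ht] at ih
    rw [spread, ht, isDistinctPartition_cons_cons, isDistinctPartition_cons_cons]
    exact ⟨by omega, by omega, ih⟩

theorem signInvolution_spread {m : List ℕ} (hm : IsDistinctPartition m)
    (hodd : ∀ x ∈ m, Odd x) : signInvolution (spread m) = spread m := by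
  induction m using spread.induct with
  | case1 => rfl
  | case2 a =>
    have := isDistinctPartition_singleton.1 hm
    have ha := Nat.odd_iff.1 (hodd a (List.mem_singleton_self a))
    rw [spread, signInvolution_lastPair, if_pos ⟨by omega, ha⟩]
  | case3 a b l ih =>
    obtain ⟨hba, hbl⟩ := isDistinctPartition_cons_cons.1 hm
    have ha := Nat.odd_iff.1 (hodd a List.mem_cons_self)
    have hb := Nat.odd_iff.1 (hodd b (List.mem_cons_of_mem a List.mem_cons_self))
    obtain ⟨t, ht⟩ := spread_cons b l
    rw [spread, ht, signInvolution_cons_cons_cons, if_pos ⟨by omega, by omega⟩, ← ht,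
      ih hbl fun x hx => hodd x (List.mem_cons_of_mem a hx)]

theorem exists_spread_eq_of_signInvolution_eq {l : List ℕ} (hl : IsDistinctPartition l)
    (hfix : signInvolution l = l) :
    ∃ m, IsDistinctPartition m ∧ (∀ x ∈ m, Odd x) ∧ spread m = l := by
  induction l, hl using IsDistinctPartition.pairInduction with
  | nil => exact ⟨[], isDistinctPartition_nil, by simp, rfl⟩
  | pair a b hba =>
    rw [signInvolution_lastPair] at hfix
    split_ifs at hfix with hab
    · refine ⟨[a], isDistinctPartition_singleton.2 (by omega),
        by simpa [Nat.odd_iff] using hab.2, ?_⟩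
      rw [spread, ← hab.1, Nat.add_sub_cancel]
    · have := congrArg Esum hfix
      rw [esum_lastPair, esum_lastPair] at this
      exact absurd this (toggle_ne_self (lo := 0) (by omega) b.zero_le)
  | cons a b c l hcb hba _ ih =>
    rw [signInvolution_cons_cons_cons] at hfix
    split_ifs at hfix with hab
    · obtain ⟨m, hm, hodd, hspread⟩ := ih (List.cons.inj (List.cons.inj hfix).2).2
      obtain ⟨x, m, rfl⟩ := List.exists_cons_of_ne_nil (l := m) (by rintro rfl; cases hspread)
      obtain ⟨t, ht⟩ := spread_cons x m
      obtain rfl : x = c := List.head_eq_of_cons_eq (ht.symm.trans hspread)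
      have hc := Nat.odd_iff.1 (hodd x List.mem_cons_self)
      refine ⟨a :: x :: m, isDistinctPartition_cons_cons.2 ⟨by omega, hm⟩, ?_, ?_⟩
      · exact List.forall_mem_cons.2 ⟨Nat.odd_iff.2 (by omega), hodd⟩
      · rw [spread, hspread, ← hab.1, Nat.add_sub_cancel]
    · exact absurd (List.cons.inj (List.cons.inj hfix).2).1
        (toggle_ne_self (lo := c + 1) (by omega) hcb)

theorem even_esum_of_signInvolution_eq {l : List ℕ} (hl : IsDistinctPartition l)
    (hfix : signInvolution l = l) : Even (Esum l) := by
  obtain ⟨m, -, hodd, rfl⟩ := exists_spread_eq_of_signInvolution_eq hl hfix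
  exact even_esum_spread hodd

theorem setOf_signInvolution_eq_self (n : ℕ) :
    {l ∈ {l : List ℕ | IsDistinctPartition l ∧ Osum l = n} | signInvolution l = l} =
      spread '' {m | IsDistinctPartition m ∧ m.sum = n ∧ ∀ x ∈ m, Odd x} := by
  ext l
  constructor
  · rintro ⟨⟨hl, rfl⟩, hfix⟩
    obtain ⟨m, hm, hodd, rfl⟩ := exists_spread_eq_of_signInvolution_eq hl hfix
    exact ⟨m, ⟨hm, (osum_spread m).symm, hodd⟩, rfl⟩
  · rintro ⟨m, ⟨hm, rfl, hodd⟩, rfl⟩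
    exact ⟨⟨isDistinctPartition_spread hm hodd, osum_spread m⟩, signInvolution_spread hm hodd⟩

/-- The signed count `∑ (−1)^{E(π)}` over partitions into distinct parts with `O(π) = n`
equals the number of partitions of `n` into distinct odd parts. -/
theorem signed_distinct_odd_count (n : ℕ) :
    (∑ᶠ l ∈ {l : List ℕ | IsDistinctPartition l ∧ Osum l = n}, ((-1 : ℤ)) ^ Esum l)
    = (Nat.card {l : List ℕ // IsDistinctPartition l ∧ l.sum = n ∧ ∀ x ∈ l, Odd x} : ℤ) := by
  rw [finsum_mem_neg_one_pow_eq_ncard (finite_setOf_osum_eq n)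
      (fun l hl => ⟨isDistinctPartition_signInvolution hl.1,
        (osum_signInvolution hl.1).trans hl.2⟩)
      (fun l hl => signInvolution_signInvolution hl.1)
      (fun l hl => odd_esum_signInvolution_add hl.1)
      (fun l hl => even_esum_of_signInvolution_eq hl.1),
    setOf_signInvolution_eq_self, spread_injective.injOn.ncard_image, ← Nat.card_coe_set_eq]
  rfl
end

section
/- Let r, t, s be nonnegative integers with r + t > 0 and let ε ∈ {1, −1}. Then the following identity holds in ℤ⟦q⟧: ∑_{π ∈ D} (−1)^{⌈E⌉(π)} ε^{⌊E⌋(π)} q^{r·⌈O⌉(π) + t·⌊O⌋(π) + s·⌊E⌋(π)} = ∏_{i≥0} (1 + (−ε)^i q^{r + (r+t+s)i}); i.e., for every n ≥ 0 the signed count ∑ (−1)^{⌈E⌉(π)} ε^{⌊E⌋(π)}, over the finitely many partitions π into distinct parts with r·⌈O⌉(π) + t·⌊O⌋(π) + s·⌊E⌋(π) = n, equals the coefficient of q^n in the product (−q^r; −ε q^{r+t+s})_∞. -/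
/-!
Weight a partition `λ1 > λ2 > ⋯` by `∏ f(λ_odd) ∏ g(λ_even)` and let `A_M(f, g)` be the total
weight of the partitions into distinct parts `≤ M`. Splitting off a largest part `M + 1` gives
`A_{M+1}(f, g) = A_M(f, g) + f(M+1) A_M(g, f)`. If `g 0 = 1` and `g (2k+1) = -g (2k)`, two steps of
this recursion show `A_{2m+1}(g, f) = 0` and `A_{2m+3}(f, g) = (1 + f(2m+3) g(2m+2)) A_{2m+1}(f, g)`.
For the Schmidt weights `f(2i+1) g(2i) = (-ε)^i q^{r + (r+t+s)i}`, and since `r + t > 0` a partition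
of weight `n` has no part exceeding `2n + 1`, so `A_{2n+1}` already carries the coefficient of `q^n`.
-/

def distinctPartitionsLE : ℕ → Finset (List ℕ)
  | 0 => {[]}
  | M + 1 => distinctPartitionsLE M ∪ (distinctPartitionsLE M).image ((M + 1) :: ·)

theorem isDistinctPartition_cons {a : ℕ} {l : List ℕ} :
    IsDistinctPartition (a :: l) ↔ (∀ b ∈ l, b < a) ∧ 0 < a ∧ IsDistinctPartition l := by
  simp only [IsDistinctPartition, List.pairwise_cons, List.forall_mem_cons, gt_iff_lt]
  tauto

theorem mem_distinctPartitionsLE {M : ℕ} {l : List ℕ} :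
    l ∈ distinctPartitionsLE M ↔ IsDistinctPartition l ∧ ∀ x ∈ l, x ≤ M := by
  induction M generalizing l with
  | zero =>
    cases l with
    | nil => simp [distinctPartitionsLE, IsDistinctPartition]
    | cons a l => simp [distinctPartitionsLE, isDistinctPartition_cons]; omega
  | succ M ih =>
    simp only [distinctPartitionsLE, Finset.mem_union, Finset.mem_image, ih]
    constructor
    · rintro (⟨hl, hle⟩ | ⟨l, ⟨hl, hle⟩, rfl⟩)
      · exact ⟨hl, fun x hx => (hle x hx).trans M.le_succ⟩
      · refine ⟨isDistinctPartition_cons.2 ⟨fun b hb => Nat.lt_succ_of_le (hle b hb), M.succ_pos, hl⟩,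
          List.forall_mem_cons.2 ⟨le_rfl, fun x hx => (hle x hx).trans M.le_succ⟩⟩
    · rintro ⟨hl, hle⟩
      cases l with
      | nil => exact Or.inl ⟨hl, by simp⟩
      | cons a l =>
        obtain ⟨hlt, -, htail⟩ := isDistinctPartition_cons.1 hl
        obtain ⟨ha, hle⟩ := List.forall_mem_cons.1 hle
        rcases Nat.lt_or_eq_of_le ha with ha | rfl
        · exact Or.inl ⟨hl, List.forall_mem_cons.2 ⟨Nat.le_of_lt_succ ha,
            fun x hx => Nat.le_of_lt_succ ((hlt x hx).trans ha)⟩⟩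
        · exact Or.inr ⟨l, ⟨htail, fun x hx => Nat.le_of_lt_succ (hlt x hx)⟩, rfl⟩

theorem sum_distinctPartitionsLE_succ {A : Type*} [AddCommMonoid A] (M : ℕ) (F : List ℕ → A) :
    ∑ l ∈ distinctPartitionsLE (M + 1), F l
      = ∑ l ∈ distinctPartitionsLE M, F l + ∑ l ∈ distinctPartitionsLE M, F ((M + 1) :: l) := by
  have hdisj : Disjoint (distinctPartitionsLE M) ((distinctPartitionsLE M).image ((M + 1) :: ·)) := by
    simp only [Finset.disjoint_left, Finset.mem_image, not_exists, not_and]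
    rintro _ hl l - rfl
    have := (mem_distinctPartitionsLE.1 hl).2 (M + 1) List.mem_cons_self
    omega
  rw [distinctPartitionsLE, Finset.sum_union hdisj,
    Finset.sum_image fun _ _ _ _ h => List.cons_injective h]

section AltProd

variable {R : Type*} [Semiring R]

def altProd : (ℕ → R) → (ℕ → R) → List ℕ → R
  | _, _, [] => 1
  | f, g, a :: l => f a * altProd g f l

def altProdSum (f g : ℕ → R) (M : ℕ) : R :=
  ∑ l ∈ distinctPartitionsLE M, altProd f g l

@[simp]
theorem altProdSum_zero (f g : ℕ → R) : altProdSum f g 0 = 1 := by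
  simp [altProdSum, distinctPartitionsLE, altProd]

theorem altProdSum_succ (f g : ℕ → R) (M : ℕ) :
    altProdSum f g (M + 1) = altProdSum f g M + f (M + 1) * altProdSum g f M := by
  simp only [altProdSum, sum_distinctPartitionsLE_succ, altProd, Finset.mul_sum]

theorem altProdSum_add_two (f g : ℕ → R) (M : ℕ) :
    altProdSum f g (M + 2) = altProdSum f g M + f (M + 1) * altProdSum g f M
      + f (M + 2) * (altProdSum g f M + g (M + 1) * altProdSum f g M) := by
  rw [altProdSum_succ, altProdSum_succ, altProdSum_succ g f]

end AltProd

section AltProdOdd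

variable {R : Type*} [CommRing R] {g : ℕ → R}

theorem altProdSum_odd_eq_zero (h0 : g 0 = 1) (hg : ∀ k, g (2 * k + 1) = -g (2 * k))
    (f : ℕ → R) (m : ℕ) : altProdSum g f (2 * m + 1) = 0 := by
  induction m with
  | zero => simp [altProdSum_succ, hg 0, h0]
  | succ m ih =>
    rw [show 2 * (m + 1) + 1 = 2 * m + 1 + 2 by ring, altProdSum_add_two, ih,
      show 2 * m + 1 + 2 = 2 * (m + 1) + 1 by ring, show 2 * m + 1 + 1 = 2 * (m + 1) by ring, hg]
    ring

theorem altProdSum_odd_eq_prod (h0 : g 0 = 1) (hg : ∀ k, g (2 * k + 1) = -g (2 * k))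
    (f : ℕ → R) (m : ℕ) :
    altProdSum f g (2 * m + 1) = ∏ i ∈ Finset.range (m + 1), (1 + f (2 * i + 1) * g (2 * i)) := by
  induction m with
  | zero => simp [altProdSum_succ, h0]
  | succ m ih =>
    rw [show 2 * (m + 1) + 1 = 2 * m + 1 + 2 by ring, altProdSum_add_two,
      altProdSum_odd_eq_zero h0 hg, ih, Finset.prod_range_succ _ (m + 1),
      show 2 * m + 1 + 2 = 2 * (m + 1) + 1 by ring, show 2 * m + 1 + 1 = 2 * (m + 1) by ring]
    ring

end AltProdOdd

section Schmidt

open PowerSeries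

theorem sumAlt_cons (f : ℕ → ℕ) (a : ℕ) (l : List ℕ) :
    sumAlt f (a :: l) = f a + sumAlt f l.tail := by
  cases l <;> simp [sumAlt]

variable (r t s : ℕ) (ε : ℤ)

noncomputable def oddPartFactor (a : ℕ) : PowerSeries ℤ :=
  X ^ (r * ((a + 1) / 2) + t * (a / 2))

noncomputable def evenPartFactor (a : ℕ) : PowerSeries ℤ :=
  C ((-1) ^ ((a + 1) / 2) * ε ^ (a / 2)) * X ^ (s * (a / 2))

theorem evenPartFactor_zero : evenPartFactor s ε 0 = 1 := by
  simp [evenPartFactor]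

theorem evenPartFactor_two_mul_add_one (k : ℕ) :
    evenPartFactor s ε (2 * k + 1) = -evenPartFactor s ε (2 * k) := by
  simp only [evenPartFactor, show (2 * k + 1 + 1) / 2 = k + 1 by omega,
    show (2 * k + 1) / 2 = k by omega, show (2 * k) / 2 = k by omega,
    pow_succ, map_mul, map_neg, map_one]
  ring

theorem oddPartFactor_mul_evenPartFactor (i : ℕ) :
    oddPartFactor r t (2 * i + 1) * evenPartFactor s ε (2 * i)
      = C ((-ε) ^ i) * X ^ (r + (r + t + s) * i) := by
  simp only [oddPartFactor, evenPartFactor, show (2 * i + 1 + 1) / 2 = i + 1 by omega,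
    show (2 * i + 1) / 2 = i by omega, show 2 * i / 2 = i by omega,
    neg_pow ε, map_mul, map_pow]
  ring

theorem altProd_partFactor (l : List ℕ) :
    altProd (oddPartFactor r t) (evenPartFactor s ε) l
        = C ((-1) ^ ceilE l * ε ^ floorE l) * X ^ (r * ceilO l + t * floorO l + s * floorE l) ∧
      altProd (evenPartFactor s ε) (oddPartFactor r t) l
        = C ((-1) ^ ceilO l * ε ^ floorO l) * X ^ (r * ceilE l + t * floorE l + s * floorO l) := by
  induction l with
  | nil => simp [altProd, ceilO, ceilE, floorO, floorE, sumAlt]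
  | cons a l ih =>
    simp only [altProd, ih.1, ih.2, ceilO, floorO, ceilE, floorE, sumAlt_cons, List.tail_cons,
      oddPartFactor, evenPartFactor, pow_add, map_mul, map_pow]
    constructor <;> ring

theorem le_two_mul_add_one_of_mem (hrt : 0 < r + t) {l : List ℕ} (hl : l.Pairwise (· ≥ ·))
    {x : ℕ} (hx : x ∈ l) : x ≤ 2 * (r * ceilO l + t * floorO l + s * floorE l) + 1 := by
  cases l with
  | nil => simp at hx
  | cons a l =>
    have hxa : x ≤ a := by
      rcases List.mem_cons.1 hx with rfl | hx
      exacts [le_rfl, (List.pairwise_cons.1 hl).1 x hx]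
    have hceil : a / 2 ≤ ceilO (a :: l) := by rw [ceilO, sumAlt_cons]; omega
    have hfloor : a / 2 ≤ floorO (a :: l) := by rw [floorO, sumAlt_cons]; omega
    have : a / 2 ≤ r * ceilO (a :: l) + t * floorO (a :: l) :=
      calc a / 2 ≤ (r + t) * (a / 2) := Nat.le_mul_of_pos_left _ hrt
        _ = r * (a / 2) + t * (a / 2) := add_mul _ _ _
        _ ≤ _ := add_le_add (Nat.mul_le_mul_left r hceil) (Nat.mul_le_mul_left t hfloor)
    omega

end Schmidt

theorem signed_general_schmidt_general (r t s : ℕ) (hrt : 0 < r + t) (ε : ℤ) (n : ℕ) :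
    (∑ᶠ l ∈ {l : List ℕ |
        IsDistinctPartition l ∧ r * ceilO l + t * floorO l + s * floorE l = n},
      ((-1 : ℤ)) ^ ceilE l * ε ^ floorE l)
    = PowerSeries.coeff n (∏ i ∈ Finset.range (n + 1),
        (1 + PowerSeries.C ((-ε) ^ i) * PowerSeries.X ^ (r + (r + t + s) * i))) := by
  have hset : {l : List ℕ | IsDistinctPartition l ∧ r * ceilO l + t * floorO l + s * floorE l = n}
      = ↑((distinctPartitionsLE (2 * n + 1)).filter
          fun l => r * ceilO l + t * floorO l + s * floorE l = n) := by
    ext l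
    simp only [Set.mem_ofPred_eq, Finset.coe_filter, mem_distinctPartitionsLE]
    refine ⟨fun ⟨hl, hn⟩ => ⟨⟨hl, fun x hx => ?_⟩, hn⟩, fun ⟨⟨hl, _⟩, hn⟩ => ⟨hl, hn⟩⟩
    exact hn ▸ le_two_mul_add_one_of_mem r t s hrt (hl.1.imp le_of_lt) hx
  rw [Finset.prod_congr rfl fun i _ => by rw [← oddPartFactor_mul_evenPartFactor],
    ← altProdSum_odd_eq_prod (evenPartFactor_zero s ε) (evenPartFactor_two_mul_add_one s ε), altProdSum,
    map_sum, hset, finsum_mem_coe_finset, Finset.sum_filter]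
  simp only [(altProd_partFactor r t s ε _).1, PowerSeries.coeff_C_mul_X_pow]
  exact Finset.sum_congr rfl fun l _ => if_congr eq_comm rfl rfl

/-- General Schmidt-type signed identity: for `r + t > 0` and `ε = ±1`,
`∑_{π ∈ D} (−1)^{⌈E⌉(π)} ε^{⌊E⌋(π)} q^{r⌈O⌉(π) + t⌊O⌋(π) + s⌊E⌋(π)}
  = ∏_{i≥0} (1 + (−ε)^i q^{r + (r+t+s)i})` in `ℤ⟦q⟧`: for every `n`, the signed count over
partitions into distinct parts with `r⌈O⌉(π) + t⌊O⌋(π) + s⌊E⌋(π) = n` equals the coefficient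
of `q^n` in the product (truncated at `i ≤ n`, which does not change this coefficient). -/
theorem signed_general_schmidt (r t s : ℕ) (hrt : 0 < r + t) (ε : ℤ)
    (hε : ε = 1 ∨ ε = -1) (n : ℕ) :
    (∑ᶠ l ∈ {l : List ℕ |
        IsDistinctPartition l ∧ r * ceilO l + t * floorO l + s * floorE l = n},
      ((-1 : ℤ)) ^ ceilE l * ε ^ floorE l)
    = PowerSeries.coeff n (∏ i ∈ Finset.range (n + 1),
        (1 + PowerSeries.C ((-ε) ^ i) * PowerSeries.X ^ (r + (r + t + s) * i))) :=
  signed_general_schmidt_general r t s hrt ε n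
end
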